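/- Let σ : A → A⁺ be a substitution that is tame and l-primitive, and let x₀ ∈ X_σ with σᵖ(x₀) = x₀ (p ≥ 1) be a periodic point of the induced map σ : X_σ → X_σ as constructed in the existence lemma. Then for every letter a ∈ A_l, the occurrences of a in the bi-infinite sequence x₀ have bounded gaps: there is d ≥ 1 such that every block of d consecutive coordinates of x₀ contains an occurrence of a. -/

import Mathlib

namespace SubstMin

variable {A : Type*}

/-- Apply a map `σ : A → A⁺` to a word by concatenation. -/
def substW (σ : A → List A) (w : List A) : List A := w.flatMap σ

/-- `n`-th iterate of the substitution applied to a word. -/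
def substIter (σ : A → List A) (n : ℕ) (w : List A) : List A := (substW σ)^[n] w

/-- The set `A_l` of letters `a` with `|σⁿ(a)| → ∞`. -/
def longLetters (σ : A → List A) : Set A :=
  {a | Filter.Tendsto (fun n => (substIter σ n [a]).length) Filter.atTop Filter.atTop}

/-- The set `A_s = A \ A_l`. -/
def shortLetters (σ : A → List A) : Set A := (longLetters σ)ᶜ

/-- `σ` is a substitution: letters map to nonempty words and `A_l ≠ ∅`. -/
def IsSubstitution (σ : A → List A) : Prop :=
  (∀ a, σ a ≠ []) ∧ (longLetters σ).Nonempty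

/-- The language `L(σ)`: factors of some `σⁿ(a)`, `n ≥ 1`. -/
def lang (σ : A → List A) : Set (List A) :=
  {w | ∃ (a : A) (n : ℕ), 1 ≤ n ∧ w <:+: substIter σ n [a]}

/-- The finite factor `x[s,t]` of a bi-infinite sequence. -/
def factorOf (x : ℤ → A) (s t : ℤ) : List A :=
  (List.range (t - s + 1).toNat).map fun i => x (s + (i : ℤ))

/-- The substitution dynamical system `X_σ`. -/
def XSub (σ : A → List A) : Set (ℤ → A) :=
  {x | ∀ s t : ℤ, s ≤ t → factorOf x s t ∈ lang σ}

/-- The left shift `T`. -/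
def shiftT (x : ℤ → A) : ℤ → A := fun i => x (i + 1)

/-- A subshift is minimal if it is nonempty and has no nonempty proper closed
shift-invariant subset. -/
def IsMinimalSubshift [TopologicalSpace A] (X : Set (ℤ → A)) : Prop :=
  X.Nonempty ∧ ∀ Y : Set (ℤ → A), Y ⊆ X → Y.Nonempty → IsClosed Y →
    shiftT '' Y = Y → Y = X

/-- `a ∈ A_l` is left isolated: `σⁿ(a) = u a w` with `u ∈ A_s⁺`, `w ∈ A*`. -/
def LeftIsolated (σ : A → List A) (a : A) : Prop :=
  ∃ n : ℕ, 1 ≤ n ∧ ∃ u w : List A, u ≠ [] ∧ (∀ b ∈ u, b ∈ shortLetters σ) ∧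
    substIter σ n [a] = u ++ a :: w

/-- `a ∈ A_l` is right isolated: `σᵐ(a) = w a u` with `u ∈ A_s⁺`, `w ∈ A*`. -/
def RightIsolated (σ : A → List A) (a : A) : Prop :=
  ∃ n : ℕ, 1 ≤ n ∧ ∃ u w : List A, u ≠ [] ∧ (∀ b ∈ u, b ∈ shortLetters σ) ∧
    substIter σ n [a] = w ++ a :: u

/-- `σ` is tame: no letter of `A_l` is left or right isolated. -/
def Tame (σ : A → List A) : Prop :=
  ∀ a ∈ longLetters σ, ¬ LeftIsolated σ a ∧ ¬ RightIsolated σ a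

/-- `σ` is `l`-primitive. -/
def LPrimitive (σ : A → List A) : Prop :=
  ∃ n : ℕ, 1 ≤ n ∧ ∀ a ∈ longLetters σ, ∀ b ∈ longLetters σ, a ∈ substIter σ n [b]

/-- `a → b` : `b` occurs in `σⁿ(a)` for some `n ≥ 1`. -/
def arrow (σ : A → List A) (a b : A) : Prop :=
  ∃ n : ℕ, 1 ≤ n ∧ b ∈ substIter σ n [a]

/-- `A_{∘,l} = {a ∈ A_l | a → a}`. -/
def circLong (σ : A → List A) : Set A := {a | a ∈ longLetters σ ∧ arrow σ a a}

/-- `A_{min,l}`: letters of `A_l` minimal in `A_l`. -/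
def minLong (σ : A → List A) : Set A :=
  {a | a ∈ longLetters σ ∧ ∀ b ∈ longLetters σ, arrow σ a b → arrow σ b a}

/-- `x` is a periodic point of the shift. -/
def IsPeriodicPoint (x : ℤ → A) : Prop := ∃ p : ℕ, 1 ≤ p ∧ shiftT^[p] x = x

/-- `X` is a single periodic orbit. -/
def IsSinglePeriodicOrbit (X : Set (ℤ → A)) : Prop :=
  ∃ x : ℤ → A, IsPeriodicPoint x ∧ X = Set.range fun i : ℤ => fun j => x (j + i)

/-- `y = σ(x)` : `y` is obtained from `x` by applying `σ` to each coordinate and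
concatenating, with `σ(x(0))` placed starting at coordinate `0`. -/
def IsSubstImage (σ : A → List A) (x y : ℤ → A) : Prop :=
  ∃ o : ℤ → ℤ, o 0 = 0 ∧ (∀ i : ℤ, o (i + 1) = o i + (σ (x i)).length) ∧
    ∀ i : ℤ, factorOf y (o i) (o (i + 1) - 1) = σ (x i)

/-- The map `s` on nonempty subsets of `A_l`: `s(F) = ⋃_{a ∈ F} (Lett(σ(a)) ∩ A_l)`. -/
def sMap (σ : A → List A) (F : Set A) : Set A :=
  {b | b ∈ longLetters σ ∧ ∃ a ∈ F, b ∈ σ a}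

end SubstMin

/-!
Let `K` bound the lengths `|σⁿ(s)|` for short letters `s`. Sending `b ∈ A_l` to the last long
letter of `σ(b)` defines a map `r` on `A`; as `A` is finite, `rᴺ(b)` is `r`-periodic, and tameness
says that along an `r`-cycle no short letter follows the last long letter of `σ(b)`. So the short
suffix of `σⁿ(b)` after its last long letter comes from the first `N` steps and has length at most
`K·|σᴺ⁺¹(b)|`; prefixes are handled by reversing `σ`. By induction on `n`, every factor of `σⁿ(c)`
made of short letters then has length at most some `G`.
If `a` occurs in `σ^{n₀}(b)` for all `b ∈ A_l`, a long enough factor of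
`σⁿ(c) = σ^{n₀}(σ^{n-n₀}(c))` covers the images of more than `G` consecutive letters of
`σ^{n-n₀}(c)`; one of them is long, so the factor contains `a`. Windows of `x₀` are such factors.
-/

theorem Function.exists_iterate_mem_periodicPts {α : Type*} [Finite α] (f : α → α) :
    ∃ N, ∀ x, f^[N] x ∈ Function.periodicPts f := by
  have h : ∀ x, ∃ n, f^[n] x ∈ Function.periodicPts f := by
    intro x
    obtain ⟨i, j, hij, heq⟩ := Finite.exists_ne_map_eq_of_infinite (f^[·] x)
    wlog hlt : i < j generalizing i j
    · exact this j i hij.symm heq.symm (by omega)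
    refine ⟨i, Function.mk_mem_periodicPts (n := j - i) (by omega) ?_⟩
    change f^[j - i] (f^[i] x) = f^[i] x
    rw [← Function.iterate_add_apply, Nat.sub_add_cancel hlt.le]
    exact heq.symm
  choose n hn using h
  obtain ⟨N, hN⟩ := Finite.exists_le n
  refine ⟨N, fun x => ?_⟩
  obtain ⟨p, hp, hpx⟩ := Function.mem_periodicPts.mp (hn x)
  rw [← Nat.sub_add_cancel (hN x), Function.iterate_add_apply]
  exact Function.mk_mem_periodicPts hp (hpx.apply_iterate _)

namespace List

variable {α β : Type*}

theorem length_flatMap_le {g : α → List β} {v : List α} {K : ℕ}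
    (h : ∀ e ∈ v, (g e).length ≤ K) : (v.flatMap g).length ≤ v.length * K := by
  rw [length_flatMap, ← smul_eq_mul, ← length_map (f := fun a => (g a).length)]
  exact sum_le_card_nsmul _ K (by simpa using h)

theorem exists_eq_flatMap_append_of_prefix_flatMap {g : α → List β} {v : List α} {p : List β}
    (hp : p <+: v.flatMap g) (hne : p ≠ []) :
    ∃ v' c q, v' <+: v ∧ q <+: g c ∧ p = v'.flatMap g ++ q := by
  induction v generalizing p with
  | nil => exact absurd (prefix_nil.mp hp) hne
  | cons c v ih =>
    rw [flatMap_cons] at hp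
    rcases prefix_or_prefix_of_prefix hp (prefix_append _ _) with hpc | ⟨q, rfl⟩
    · exact ⟨[], c, p, by simp, hpc, by simp⟩
    · rcases eq_or_ne q [] with rfl | hq
      · exact ⟨[], c, g c, by simp, prefix_refl _, by simp⟩
      obtain ⟨v', c', q', hv', hq', rfl⟩ := ih (prefix_self_append_iff.mp hp) hq
      exact ⟨c :: v', c', q', by simpa using hv', hq', by simp⟩

theorem infix_flatMap_cases {g : α → List β} {v : List α} {w : List β}
    (hw : w <:+: v.flatMap g) (hne : w ≠ []) :
    (∃ c, w <:+: g c) ∨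
      ∃ c₁ v' c₂ s p, v' <:+: v ∧ s <:+ g c₁ ∧ p <+: g c₂ ∧ w = s ++ v'.flatMap g ++ p := by
  induction v with
  | nil => exact absurd (eq_nil_of_infix_nil hw) hne
  | cons c v ih =>
    rw [flatMap_cons] at hw
    rcases infix_append_iff_ne_nil.mp hw with hc | hv | ⟨s, q, -, hq, rfl, hs, hqv⟩
    · exact .inl ⟨c, hc⟩
    · refine (ih hv).imp id fun ⟨c₁, v', c₂, s, p, hv', h⟩ => ⟨c₁, v', c₂, s, p, ?_, h⟩
      exact hv'.trans (suffix_cons c v).isInfix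
    · obtain ⟨v', c', p, hv', hp, rfl⟩ := exists_eq_flatMap_append_of_prefix_flatMap hqv hq
      exact .inr ⟨c, v', c', s, p, hv'.isInfix.trans (suffix_cons c v).isInfix, hs, hp,
        by simp⟩

end List

namespace SubstMin

open Function List Filter

variable {A : Type*} {σ : A → List A}

lemma substIter_succ (σ : A → List A) (n : ℕ) (w : List A) :
    substIter σ (n + 1) w = substIter σ n (substW σ w) :=
  iterate_succ_apply _ _ _

lemma substIter_add (σ : A → List A) (m n : ℕ) (w : List A) :
    substIter σ (m + n) w = substIter σ m (substIter σ n w) :=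
  iterate_add_apply _ _ _ _

lemma substIter_singleton_succ (σ : A → List A) (n : ℕ) (c : A) :
    substIter σ (n + 1) [c] = substIter σ n (σ c) := by
  simp [substIter_succ, substW]

lemma substIter_eq_flatMap (σ : A → List A) (n : ℕ) (w : List A) :
    substIter σ n w = w.flatMap fun c => substIter σ n [c] := by
  induction n generalizing w with
  | zero => simp [substIter]
  | succ n ih =>
    simp only [substIter_succ, substW, flatMap_singleton]
    rw [ih, flatMap_assoc]
    simp only [← ih]

lemma substIter_append (σ : A → List A) (n : ℕ) (u v : List A) :
    substIter σ n (u ++ v) = substIter σ n u ++ substIter σ n v := by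
  rw [substIter_eq_flatMap, flatMap_append, ← substIter_eq_flatMap, ← substIter_eq_flatMap]

lemma length_le_length_substW (hσ : ∀ a, σ a ≠ []) (w : List A) :
    w.length ≤ (substW σ w).length := by
  rw [substW, length_flatMap, ← length_map (f := fun a => (σ a).length)]
  exact length_le_sum_of_one_le _ (by simpa [Nat.one_le_iff_ne_zero] using fun a _ => hσ a)

lemma length_substIter_mono (hσ : ∀ a, σ a ≠ []) (w : List A) :
    Monotone fun n => (substIter σ n w).length :=
  monotone_nat_of_le_succ fun n => by
    simpa only [substIter, iterate_succ_apply'] using length_le_length_substW hσ _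

lemma substIter_ne_nil (hσ : ∀ a, σ a ≠ []) (n : ℕ) {w : List A} (hw : w ≠ []) :
    substIter σ n w ≠ [] := by
  have : w.length ≤ (substIter σ n w).length := length_substIter_mono hσ w (Nat.zero_le n)
  exact ne_nil_of_length_pos (by have := length_pos_iff.mpr hw; omega)

def IsShortWord (σ : A → List A) (w : List A) : Prop := ∀ e ∈ w, e ∈ shortLetters σ

lemma IsShortWord.append {u v : List A} (hu : IsShortWord σ u) (hv : IsShortWord σ v) :
    IsShortWord σ (u ++ v) := by
  intro e he
  rcases mem_append.mp he with he | he
  exacts [hu e he, hv e he]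

lemma mem_longLetters_of_mem_substIter {n : ℕ} {b e : A} (he : e ∈ substIter σ n [b])
    (hel : e ∈ longLetters σ) : b ∈ longLetters σ := by
  have hle : ∀ m, (substIter σ m [e]).length ≤ (substIter σ (m + n) [b]).length := fun m => by
    rw [substIter_add, substIter_eq_flatMap σ m (substIter σ n [b])]
    exact (infix_flatMap_of_mem he fun c => substIter σ m [c]).length_le
  exact (tendsto_add_atTop_iff_nat n).mp (tendsto_atTop_mono hle hel)

lemma IsShortWord.substIter {w : List A} (hw : IsShortWord σ w) (n : ℕ) :
    IsShortWord σ (substIter σ n w) := by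
  intro e he hel
  rw [substIter_eq_flatMap, mem_flatMap] at he
  obtain ⟨c, hc, he⟩ := he
  exact hw c hc (mem_longLetters_of_mem_substIter he hel)

lemma exists_length_substIter_le_of_short [Finite A] (hσ : ∀ a, σ a ≠ []) :
    ∃ K, ∀ s ∈ shortLetters σ, ∀ n, (substIter σ n [s]).length ≤ K := by
  have h : ∀ s, ∃ K, s ∈ shortLetters σ → ∀ n, (substIter σ n [s]).length ≤ K := by
    intro s
    by_contra! hs
    refine (hs 0).1 (tendsto_atTop_atTop_of_monotone (length_substIter_mono hσ [s]) fun K => ?_)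
    obtain ⟨n, hn⟩ := (hs K).2
    exact ⟨n, hn.le⟩
  choose K hK using h
  obtain ⟨M, hM⟩ := Finite.exists_le K
  exact ⟨M, fun s hs n => (hK s hs n).trans (hM s)⟩

lemma length_substIter_le_of_isShortWord {K : ℕ}
    (hK : ∀ s ∈ shortLetters σ, ∀ n, (substIter σ n [s]).length ≤ K)
    {w : List A} (hw : IsShortWord σ w) (n : ℕ) :
    (substIter σ n w).length ≤ w.length * K := by
  rw [substIter_eq_flatMap]
  exact length_flatMap_le fun e he => hK e (hw e he) n

lemma exists_long_mem_substIter [Finite A] (hσ : ∀ a, σ a ≠ []) {b : A}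
    (hb : b ∈ longLetters σ) (n : ℕ) : ∃ e ∈ substIter σ n [b], e ∈ longLetters σ := by
  by_contra! hshort
  obtain ⟨K, hK⟩ := exists_length_substIter_le_of_short hσ
  obtain ⟨m, hm⟩ := (hb.eventually_gt_atTop ((substIter σ n [b]).length * K)).exists_forall_of_atTop
  have := hm (m + n) (by omega)
  rw [substIter_add] at this
  have := length_substIter_le_of_isShortWord hK hshort m
  omega

lemma IsShortWord.length_le_of_suffix {s w u : List A} {ℓ : A} (hs : IsShortWord σ s)
    (hℓ : ℓ ∈ longLetters σ) (hsuf : s <:+ w ++ ℓ :: u) : s.length ≤ u.length := by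
  by_contra! hlt
  have : ℓ :: u <:+ s := suffix_of_suffix_length_le (suffix_append _ _) hsuf (by simpa)
  exact hs ℓ (this.subset mem_cons_self) hℓ

lemma exists_eq_append_cons_of_long_mem {w : List A} (h : ∃ e ∈ w, e ∈ longLetters σ) :
    ∃ y ℓ t, w = y ++ ℓ :: t ∧ ℓ ∈ longLetters σ ∧ IsShortWord σ t := by
  induction w with
  | nil => simp at h
  | cons c w ih =>
    by_cases hw : ∃ e ∈ w, e ∈ longLetters σ
    · obtain ⟨y, ℓ, t, rfl, hℓ, ht⟩ := ih hw
      exact ⟨c :: y, ℓ, t, rfl, hℓ, ht⟩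
    · push Not at hw
      obtain ⟨e, he, hel⟩ := h
      refine ⟨[], c, w, rfl, ?_, hw⟩
      rcases mem_cons.mp he with rfl | he
      exacts [hel, absurd hel (hw e he)]

def LastLongSplit (σ : A → List A) (y : A → List A) (r : A → A) (t : A → List A) : Prop :=
  ∀ b ∈ longLetters σ, σ b = y b ++ r b :: t b ∧ r b ∈ longLetters σ ∧ IsShortWord σ (t b)

lemma exists_lastLongSplit [Finite A] (hσ : ∀ a, σ a ≠ []) :
    ∃ y r t, LastLongSplit σ y r t := by
  have h : ∀ b, ∃ y ℓ t, b ∈ longLetters σ →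
      σ b = y ++ ℓ :: t ∧ ℓ ∈ longLetters σ ∧ IsShortWord σ t := by
    intro b
    by_cases hb : b ∈ longLetters σ
    · obtain ⟨y, ℓ, t, h⟩ := exists_eq_append_cons_of_long_mem (by
        simpa [substIter, substW] using exists_long_mem_substIter hσ hb 1)
      exact ⟨y, ℓ, t, fun _ => h⟩
    · exact ⟨[], b, [], fun h => absurd h hb⟩
  choose y r t h using h
  exact ⟨y, r, t, h⟩

namespace LastLongSplit

variable {y t : A → List A} {r : A → A}

lemma iterate_mem_longLetters (h : LastLongSplit σ y r t) {b : A} (hb : b ∈ longLetters σ)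
    (n : ℕ) : r^[n] b ∈ longLetters σ := by
  induction n with
  | zero => exact hb
  | succ n ih => simpa only [iterate_succ_apply'] using (h _ ih).2.1

lemma substIter_succ_eq (h : LastLongSplit σ y r t) {b : A} (hb : b ∈ longLetters σ) (n : ℕ) :
    ∃ w u, substIter σ (n + 1) [b] = w ++ r^[n + 1] b :: (u ++ substIter σ n (t b)) ∧
      IsShortWord σ u := by
  induction n generalizing b with
  | zero => exact ⟨y b, [], by simp [substIter, substW, (h b hb).1], by simp [IsShortWord]⟩
  | succ n ih =>
    obtain ⟨hσb, hrb, htb⟩ := h b hb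
    obtain ⟨w, u, hw, hu⟩ := ih hrb
    refine ⟨substIter σ (n + 1) (y b) ++ w, u ++ substIter σ n (t (r b)), ?_,
      hu.append ((h (r b) hrb).2.2.substIter n)⟩
    rw [substIter_singleton_succ, hσb, append_cons (y b), substIter_append, substIter_append,
      hw, iterate_succ_apply]
    simp

/-- Otherwise `σᵖ(b) = w b u` with `u ∈ A_s⁺`, and `b` would be right isolated. -/
lemma tail_eq_nil (h : LastLongSplit σ y r t) (hσ : ∀ a, σ a ≠ []) (htame : Tame σ) {b : A}
    (hb : b ∈ longLetters σ) (hper : b ∈ periodicPts r) : t b = [] := by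
  obtain ⟨_ | n, hn, hbn⟩ := mem_periodicPts.mp hper
  · omega
  by_contra htb
  obtain ⟨w, u, hw, hu⟩ := h.substIter_succ_eq hb n
  rw [show r^[n + 1] b = b from hbn] at hw
  exact (htame b hb).2 ⟨n + 1, by omega, u ++ substIter σ n (t b), w,
    append_ne_nil_of_right_ne_nil _ (substIter_ne_nil hσ n htb),
    hu.append ((h b hb).2.2.substIter n), hw⟩

lemma substIter_eq_append_singleton (h : LastLongSplit σ y r t) (hσ : ∀ a, σ a ≠ [])
    (htame : Tame σ) {b : A} (hb : b ∈ longLetters σ) (hper : b ∈ periodicPts r) (n : ℕ) :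
    ∃ w, substIter σ n [b] = w ++ [r^[n] b] := by
  induction n generalizing b with
  | zero => exact ⟨[], rfl⟩
  | succ n ih =>
    obtain ⟨hσb, hrb, -⟩ := h b hb
    obtain ⟨p, hp, hbp⟩ := mem_periodicPts.mp hper
    obtain ⟨w, hw⟩ := ih hrb (mk_mem_periodicPts hp hbp.apply)
    refine ⟨substIter σ n (y b) ++ w, ?_⟩
    rw [substIter_singleton_succ, hσb, h.tail_eq_nil hσ htame hb hper, substIter_append, hw,
      iterate_succ_apply, append_assoc]

lemma exists_substIter_add_eq (h : LastLongSplit σ y r t) (hσ : ∀ a, σ a ≠ [])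
    (htame : Tame σ) {b : A} (hb : b ∈ longLetters σ) {n : ℕ}
    (hper : r^[n + 1] b ∈ periodicPts r) (k : ℕ) :
    ∃ W ℓ u, substIter σ (k + (n + 1)) [b] = W ++ ℓ :: substIter σ k u ∧ ℓ ∈ longLetters σ ∧
      IsShortWord σ u ∧ u.length ≤ (substIter σ (n + 1) [b]).length := by
  obtain ⟨w, u, hw, hu⟩ := h.substIter_succ_eq hb n
  obtain ⟨w', hw'⟩ :=
    h.substIter_eq_append_singleton hσ htame (h.iterate_mem_longLetters hb _) hper k
  refine ⟨substIter σ k w ++ w', r^[k] (r^[n + 1] b), u ++ substIter σ n (t b), ?_,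
    h.iterate_mem_longLetters (h.iterate_mem_longLetters hb _) k,
    hu.append ((h b hb).2.2.substIter n), by simp only [hw, length_append, length_cons]; omega⟩
  rw [substIter_add, hw, append_cons w, substIter_append, substIter_append, hw']
  simp

end LastLongSplit

lemma exists_short_suffix_bound [Finite A] (hσ : ∀ a, σ a ≠ []) (htame : Tame σ) :
    ∃ G, ∀ n c s, IsShortWord σ s → s <:+ substIter σ n [c] → s.length ≤ G := by
  obtain ⟨K, hK⟩ := exists_length_substIter_le_of_short hσ
  obtain ⟨y, r, t, h⟩ := exists_lastLongSplit hσ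
  obtain ⟨N, hN⟩ := exists_iterate_mem_periodicPts r
  obtain ⟨L, hL⟩ := Finite.exists_le fun c => (substIter σ (N + 1) [c]).length
  refine ⟨K + L + L * K, fun n c s hs hsc => ?_⟩
  have hsn := hsc.length_le
  by_cases hc : c ∈ longLetters σ
  swap
  · have := hK c hc n
    omega
  rcases le_or_gt n (N + 1) with hn | hn
  · have : (substIter σ n [c]).length ≤ (substIter σ (N + 1) [c]).length :=
      length_substIter_mono hσ [c] hn
    have := hL c
    omega
  obtain ⟨k, rfl⟩ := Nat.exists_eq_add_of_le' hn.le
  have hper : r^[N + 1] c ∈ periodicPts r := by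
    rw [iterate_succ_apply]
    exact hN (r c)
  obtain ⟨W, ℓ, u, hdecomp, hℓ, hu, hu_len⟩ := h.exists_substIter_add_eq hσ htame hc hper k
  have := hs.length_le_of_suffix hℓ (hdecomp ▸ hsc)
  have := length_substIter_le_of_isShortWord hK hu k
  have := Nat.mul_le_mul_right K (hu_len.trans (hL c))
  omega

def reverseSubst (σ : A → List A) (a : A) : List A := (σ a).reverse

lemma substIter_reverseSubst (σ : A → List A) (n : ℕ) (w : List A) :
    substIter (reverseSubst σ) n w = (substIter σ n w.reverse).reverse := by
  induction n generalizing w with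
  | zero => simp [substIter]
  | succ n ih =>
    rw [substIter_succ, substIter_succ, ih]
    simp [substW, reverseSubst, reverse_flatMap, comp_def]

lemma longLetters_reverseSubst (σ : A → List A) :
    longLetters (reverseSubst σ) = longLetters σ := by
  simp [longLetters, substIter_reverseSubst]

lemma shortLetters_reverseSubst (σ : A → List A) :
    shortLetters (reverseSubst σ) = shortLetters σ := by
  rw [shortLetters, shortLetters, longLetters_reverseSubst]

lemma rightIsolated_of_leftIsolated_reverseSubst {a : A}
    (h : LeftIsolated (reverseSubst σ) a) : RightIsolated σ a := by
  obtain ⟨n, hn, u, w, hu, hus, hσn⟩ := h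
  refine ⟨n, hn, u.reverse, w.reverse, by simpa using hu,
    by simpa [shortLetters_reverseSubst] using hus, ?_⟩
  simpa [substIter_reverseSubst] using congrArg reverse hσn

lemma leftIsolated_of_rightIsolated_reverseSubst {a : A}
    (h : RightIsolated (reverseSubst σ) a) : LeftIsolated σ a := by
  obtain ⟨n, hn, u, w, hu, hus, hσn⟩ := h
  refine ⟨n, hn, u.reverse, w.reverse, by simpa using hu,
    by simpa [shortLetters_reverseSubst] using hus, ?_⟩
  simpa [substIter_reverseSubst] using congrArg reverse hσn

lemma Tame.reverseSubst (htame : Tame σ) : Tame (reverseSubst σ) := by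
  intro a ha
  rw [longLetters_reverseSubst] at ha
  exact ⟨fun h => (htame a ha).2 (rightIsolated_of_leftIsolated_reverseSubst h),
    fun h => (htame a ha).1 (leftIsolated_of_rightIsolated_reverseSubst h)⟩

lemma exists_short_prefix_bound [Finite A] (hσ : ∀ a, σ a ≠ []) (htame : Tame σ) :
    ∃ G, ∀ n c p, IsShortWord σ p → p <+: substIter σ n [c] → p.length ≤ G := by
  obtain ⟨G, hG⟩ := exists_short_suffix_bound (σ := reverseSubst σ)
    (by simpa [reverseSubst] using hσ) htame.reverseSubst
  refine ⟨G, fun n c p hp hpc => ?_⟩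
  simpa using hG n c p.reverse (by simpa [IsShortWord, shortLetters_reverseSubst] using hp)
    (by simpa [substIter_reverseSubst] using hpc)

lemma exists_short_factor_bound [Finite A] (hσ : ∀ a, σ a ≠ []) (htame : Tame σ) :
    ∃ G, ∀ n c B, IsShortWord σ B → B <:+: substIter σ n [c] → B.length ≤ G := by
  obtain ⟨Gs, hGs⟩ := exists_short_suffix_bound hσ htame
  obtain ⟨Gp, hGp⟩ := exists_short_prefix_bound hσ htame
  obtain ⟨K, hK⟩ := exists_length_substIter_le_of_short hσ
  obtain ⟨C, hC⟩ := Finite.exists_le fun c => (σ c).length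
  refine ⟨Gs + C * K + Gp + 1, fun n => ?_⟩
  induction n with
  | zero =>
    intro c B _ hB
    have := hB.length_le
    simp only [substIter, iterate_zero, id, length_singleton] at this
    omega
  | succ n ih =>
    intro c B hB hBc
    rcases eq_or_ne B [] with rfl | hne
    · simp
    rw [substIter_singleton_succ, substIter_eq_flatMap] at hBc
    rcases infix_flatMap_cases hBc hne with ⟨e, he⟩ | ⟨c₁, v, c₂, s, p, hv, hs, hp, rfl⟩
    · exact ih e B hB he
    have hv_short : IsShortWord σ v := fun e he hel => by
      obtain ⟨e', he', he'l⟩ := exists_long_mem_substIter hσ hel n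
      exact hB e' (mem_append_left _ (mem_append_right _ (mem_flatMap.mpr ⟨e, he, he'⟩))) he'l
    have hs_len := hGs n c₁ s (fun e he => hB e (by simp [he])) hs
    have hp_len := hGp n c₂ p (fun e he => hB e (by simp [he])) hp
    have hv_len := length_flatMap_le fun e he => hK e (hv_short e he) n
    have := Nat.mul_le_mul_right K (hv.length_le.trans (hC c))
    simp only [length_append]
    omega

lemma exists_forall_mem_of_infix_substIter [Finite A] (hσ : ∀ a, σ a ≠ []) (htame : Tame σ)
    (hprim : LPrimitive σ) {a : A} (ha : a ∈ longLetters σ) :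
    ∃ D, ∀ n c w, w <:+: substIter σ n [c] → D ≤ w.length → a ∈ w := by
  obtain ⟨n₀, -, hn₀⟩ := hprim
  obtain ⟨G, hG⟩ := exists_short_factor_bound hσ htame
  obtain ⟨M, hM⟩ := Finite.exists_le fun c => (substIter σ n₀ [c]).length
  refine ⟨G * M + 2 * M + 1, fun n c w hw hlen => ?_⟩
  rcases lt_or_ge n n₀ with hn | hn
  · have : (substIter σ n [c]).length ≤ (substIter σ n₀ [c]).length :=
      length_substIter_mono hσ _ hn.le
    have := hw.length_le
    have := hM c
    omega
  obtain ⟨k, rfl⟩ := Nat.exists_eq_add_of_le hn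
  rw [substIter_add, substIter_eq_flatMap] at hw
  rcases infix_flatMap_cases hw (ne_nil_of_length_pos (by omega)) with
    ⟨e, he⟩ | ⟨c₁, v, c₂, s, p, hv, hs, hp, rfl⟩
  · have := he.length_le
    have := hM e
    omega
  obtain ⟨e, he, hel⟩ : ∃ e ∈ v, e ∈ longLetters σ := by
    by_contra! hv_short
    have := Nat.mul_le_mul_right M (hG k c v hv_short hv)
    have := hs.length_le.trans (hM c₁)
    have := hp.length_le.trans (hM c₂)
    have := length_flatMap_le fun e (_ : e ∈ v) => hM e
    simp only [length_append] at hlen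
    omega
  exact mem_append_left _ (mem_append_right _ (mem_flatMap.mpr ⟨e, he, hn₀ a ha e hel⟩))

lemma length_factorOf (x : ℤ → A) (s t : ℤ) : (factorOf x s t).length = (t - s + 1).toNat := by
  simp [factorOf]

lemma mem_factorOf {x : ℤ → A} {s t : ℤ} {a : A} :
    a ∈ factorOf x s t ↔ ∃ j, s ≤ j ∧ j ≤ t ∧ x j = a := by
  -- the indices in `factorOf` range over `List.range` coerced to `List ℤ`
  simp only [factorOf, List.mem_map]
  constructor
  · rintro ⟨i, hi, rfl⟩
    obtain ⟨k, hk, rfl⟩ : ∃ k : ℕ, (k : ℤ) ≤ t - s ∧ i = k := by simpa using hi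
    exact ⟨s + k, by omega, by omega, rfl⟩
  · rintro ⟨j, hsj, hjt, rfl⟩
    have : ∃ k : ℕ, (k : ℤ) ≤ t - s ∧ j - s = k := ⟨(j - s).toNat, by omega, by omega⟩
    exact ⟨j - s, by simpa using this, by simp⟩

end SubstMin

theorem statement12_general {A : Type*} [Fintype A] (σ : A → List A)
    (hσ : SubstMin.IsSubstitution σ) (htame : SubstMin.Tame σ)
    (hprim : SubstMin.LPrimitive σ)
    (x₀ : ℤ → A) (hx₀ : x₀ ∈ SubstMin.XSub σ) :
    ∀ a ∈ SubstMin.longLetters σ, ∃ d : ℕ, 1 ≤ d ∧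
      ∀ m : ℤ, ∃ j : ℤ, m ≤ j ∧ j < m + (d : ℤ) ∧ x₀ j = a := by
  intro a ha
  obtain ⟨D, hD⟩ := SubstMin.exists_forall_mem_of_infix_substIter hσ.1 htame hprim ha
  refine ⟨D + 1, by omega, fun m => ?_⟩
  obtain ⟨c, n, -, hw⟩ := hx₀ m (m + D) (by omega)
  have hlen : D ≤ (SubstMin.factorOf x₀ m (m + D)).length := by
    rw [SubstMin.length_factorOf]
    omega
  obtain ⟨j, hmj, hjD, hj⟩ := SubstMin.mem_factorOf.mp (hD n c _ hw hlen)
  exact ⟨j, hmj, by omega, hj⟩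

/-- For a tame `l`-primitive substitution and a periodic point
`x₀ ∈ X_σ` of the induced map `σ : X_σ → X_σ` (with `σᵖ(x₀) = x₀`, `p ≥ 1`), every
letter `a ∈ A_l` occurs in `x₀` with bounded gaps. -/
theorem statement12 {A : Type*} [Fintype A] (σ : A → List A)
    (hσ : SubstMin.IsSubstitution σ) (htame : SubstMin.Tame σ)
    (hprim : SubstMin.LPrimitive σ)
    (x₀ : ℤ → A) (hx₀ : x₀ ∈ SubstMin.XSub σ) (p : ℕ) (hp : 1 ≤ p)
    (ys : ℕ → (ℤ → A)) (hys0 : ys 0 = x₀) (hysp : ys p = x₀)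
    (hstep : ∀ k < p, SubstMin.IsSubstImage σ (ys k) (ys (k + 1))) :
    ∀ a ∈ SubstMin.longLetters σ, ∃ d : ℕ, 1 ≤ d ∧
      ∀ m : ℤ, ∃ j : ℤ, m ≤ j ∧ j < m + (d : ℤ) ∧ x₀ j = a :=
  statement12_general σ hσ htame hprim x₀ hx₀
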